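/- Within a connected crystal component of valued-set tableaux of shape λ, the map sending a tableau to its reading word is injective. More precisely: for fixed numbers b_1, ..., b_{λ_1} (the number of buoy entries in each column), there is at most one valued-set tableau of shape λ with those column buoy counts and a given reading word. -/

import Mathlib

/-- Scanning left to right (`+` for letter `i`, `-` for `i+1`, canceling ordered pairs
`-+`), returns (number of uncanceled `+`, number of uncanceled `-`). -/
def sigFold (i : ℕ) (w : List ℕ) : ℕ × ℕ :=
  w.foldl (fun pm a =>
    if a = i then (if 0 < pm.2 then (pm.1, pm.2 - 1) else (pm.1 + 1, pm.2))
    else if a = i + 1 then (pm.1, pm.2 + 1) else pm) (0, 0)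

/-- Position of the rightmost uncanceled `+` (a letter `i`). -/
def fPos (i : ℕ) (w : List ℕ) : Option ℕ :=
  ((List.range w.length).filter
    (fun j => decide (w[j]? = some i ∧ (sigFold i (w.take j)).2 = 0))).getLast?

/-- Position of the leftmost uncanceled `-` (a letter `i+1`). -/
def ePos (i : ℕ) (w : List ℕ) : Option ℕ :=
  ((List.range w.length).filter
    (fun j => decide (w[j]? = some (i + 1) ∧ (sigFold i (w.drop (j + 1))).1 = 0))).head?

/-- `sh` is a partition: weakly decreasing list of positive integers. -/
def IsPartition (sh : List ℕ) : Prop :=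
  sh.Pairwise (· ≥ ·) ∧ ∀ x ∈ sh, 0 < x

/-- The box in row `r`, column `c` (both 0-indexed) belongs to the Young diagram of `sh`. -/
abbrev InShape (sh : List ℕ) (r c : ℕ) : Prop := c < sh.getD r 0

/-- Number of boxes in column `c` of the shape `sh`. -/
def colHeight (sh : List ℕ) (c : ℕ) : ℕ := (sh.filter (fun p => decide (c < p))).length

/-! Valued-set tableaux. -/

/-- A semistandard Young tableau with each row partitioned into contiguous groups:
`entry` gives the entries, and `start r c = true` marks that box `(r, c)` is the
leftmost box (the buoy) of its group. -/
structure VST where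
  entry : ℕ → ℕ → ℕ
  start : ℕ → ℕ → Bool

/-- A valued-set tableau of shape `sh` with entries in `{1, …, n}`: a semistandard Young
tableau of shape `sh` whose rows are split into contiguous groups of equal entries. -/
def IsVST (n : ℕ) (sh : List ℕ) (T : VST) : Prop :=
  (∀ r c, ¬ InShape sh r c → T.entry r c = 0 ∧ T.start r c = false) ∧
  (∀ r c, InShape sh r c → 1 ≤ T.entry r c ∧ T.entry r c ≤ n) ∧
  (∀ r c, InShape sh r (c + 1) → T.entry r c ≤ T.entry r (c + 1)) ∧
  (∀ r c, InShape sh (r + 1) c → T.entry r c < T.entry (r + 1) c) ∧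
  (∀ r, InShape sh r 0 → T.start r 0 = true) ∧
  (∀ r c, InShape sh r (c + 1) → T.start r (c + 1) = false →
    T.entry r (c + 1) = T.entry r c)

/-- Tagged buoy reading word: the buoy entries, columns left to right, bottom to top
within each column; each letter is tagged with its box. -/
def vstTagged (sh : List ℕ) (T : VST) : List (ℕ × ℕ × ℕ) :=
  ((List.range (sh.headD 0)).map (fun c =>
    (List.range (colHeight sh c)).reverse.filterMap (fun r =>
      if T.start r c then some (T.entry r c, r, c) else none))).flatten

/-- The (buoy) reading word of a valued-set tableau. -/
def vstWord (sh : List ℕ) (T : VST) : List ℕ := (vstTagged sh T).map (·.1)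

/-- The column of the anchor (rightmost box) of the group whose buoy is in box `(r, c)`. -/
def anchorCol (sh : List ℕ) (T : VST) (r c : ℕ) : ℕ :=
  (((List.range (sh.getD r 0)).filter (fun c' =>
    decide (c ≤ c' ∧ (¬ InShape sh r (c' + 1) ∨ T.start r (c' + 1) = true)))).headD c)

/-- The crystal operator `f_i` on valued-set tableaux, acting on the group `g` of the
rightmost uncanceled `+`: if the entry immediately below the anchor of `g` is an `i+1`,
move the divider between `g` and the group immediately to the left of `g` one step down;
otherwise change every `i` in `g` to an `i+1`. -/
def vstF (sh : List ℕ) (i : ℕ) (T : VST) : Option VST :=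
  (fPos i (vstWord sh T)).map (fun j =>
    let t := (vstTagged sh T).getD j (0, 0, 0)
    let r := t.2.1
    let cs := t.2.2
    let ce := anchorCol sh T r cs
    if InShape sh (r + 1) ce ∧ T.entry (r + 1) ce = i + 1 then
      { T with start := fun r' c' =>
          if r' = r ∧ c' = cs then false
          else if r' = r + 1 ∧ c' = cs then true
          else T.start r' c' }
    else
      { T with entry := fun r' c' =>
          if r' = r ∧ cs ≤ c' ∧ c' ≤ ce then i + 1 else T.entry r' c' })

/-- The crystal operator `e_i` on valued-set tableaux, acting on the group `g` of the
leftmost uncanceled `-`: if the entry immediately above the anchor of `g` is an `i`,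
move the divider between `g` and the group immediately to the left of `g` one step up;
otherwise change every `i+1` in `g` to an `i`. -/
def vstE (sh : List ℕ) (i : ℕ) (T : VST) : Option VST :=
  (ePos i (vstWord sh T)).map (fun j =>
    let t := (vstTagged sh T).getD j (0, 0, 0)
    let r := t.2.1
    let cs := t.2.2
    let ce := anchorCol sh T r cs
    if 0 < r ∧ T.entry (r - 1) ce = i then
      { T with start := fun r' c' =>
          if r' = r ∧ c' = cs then false
          else if r' + 1 = r ∧ c' = cs then true
          else T.start r' c' }
    else
      { T with entry := fun r' c' =>
          if r' = r ∧ cs ≤ c' ∧ c' ≤ ce then i else T.entry r' c' })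

/-- A valued-set tableau is highest weight if it is killed by all raising operators. -/
def VstHW (sh : List ℕ) (T : VST) : Prop := ∀ i, 1 ≤ i → vstE sh i T = none

/-- Number of buoy entries in column `c` of the valued-set tableau `T`. -/
def buoyCount (sh : List ℕ) (T : VST) (c : ℕ) : ℕ :=
  ((List.range (colHeight sh c)).filter (fun r => T.start r c)).length

/-! A column is recovered from its buoy word (read top to bottom) and the column to its left,
working up from the bottom box, because a non-buoy copies its left neighbour, a buoy is at least
its left neighbour, and columns strictly increase. If of two such columns only the first had a
buoy in the bottom box, the last letter `x` of their common buoy word would be an entry of the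
second column above its bottom box, so `x` < (its bottom entry) = (left neighbour) ≤ (bottom
entry of the first column) = `x`. The reading word concatenates the reversed buoy words of the
columns, whose lengths are the column buoy counts, so the tableau is recovered column by column
from the left. -/

def buoyWord (h : ℕ) (s : ℕ → Bool) (E : ℕ → ℕ) : List ℕ :=
  (List.range h).filterMap fun r => if s r then some (E r) else none

lemma buoyWord_succ (h : ℕ) (s : ℕ → Bool) (E : ℕ → ℕ) :
    buoyWord (h + 1) s E = buoyWord h s E ++ if s h then [E h] else [] := by
  cases hs : s h <;> simp [buoyWord, List.range_succ, hs]

lemma length_buoyWord (h : ℕ) (s : ℕ → Bool) (E : ℕ → ℕ) :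
    (buoyWord h s E).length = ((List.range h).filter s).length := by
  rw [buoyWord, List.length_filterMap_eq_countP, List.countP_eq_length_filter]
  congr 2
  funext r
  cases s r <;> rfl

/-- `L` is the column to the left of the column `E` (constantly `0` for the first column). -/
structure IsBuoyColumn (h : ℕ) (L E : ℕ → ℕ) (s : ℕ → Bool) : Prop where
  lt_succ : ∀ r, r + 1 < h → E r < E (r + 1)
  le : ∀ r, r < h → L r ≤ E r
  eq_of_start_eq_false : ∀ r, r < h → s r = false → E r = L r

namespace IsBuoyColumn

variable {h : ℕ} {L E E' : ℕ → ℕ} {s s' : ℕ → Bool}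

lemma mono {h' : ℕ} (hC : IsBuoyColumn h L E s) (hh : h' ≤ h) : IsBuoyColumn h' L E s :=
  ⟨fun r hr => hC.lt_succ r (by omega), fun r hr => hC.le r (by omega),
    fun r hr => hC.eq_of_start_eq_false r (by omega)⟩

lemma lt_of_mem_buoyWord (hC : IsBuoyColumn (h + 1) L E s) {x : ℕ}
    (hx : x ∈ buoyWord h s E) : x < E h := by
  obtain ⟨r, hr, hrx⟩ := List.mem_filterMap.mp hx
  have hmono : StrictMonoOn E (Set.Iic h) := strictMonoOn_Iic_of_lt_succ fun m hm => by
    simpa only [Order.succ_eq_add_one] using hC.lt_succ m (by omega)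
  have hrh : r < h := List.mem_range.mp hr
  cases hs : s r <;> simp only [hs, Bool.false_eq_true, ↓reduceIte, reduceCtorEq,
    Option.some.injEq] at hrx
  exact hrx ▸ hmono (Set.mem_Iic.mpr hrh.le) (Set.mem_Iic.mpr le_rfl) hrh

lemma start_last_eq (hC : IsBuoyColumn (h + 1) L E s) (hC' : IsBuoyColumn (h + 1) L E' s')
    (hw : buoyWord (h + 1) s E = buoyWord (h + 1) s' E') : s h = s' h := by
  wlog hs : s h = true ∧ s' h = false generalizing s s' E E'
  · cases hsh : s h <;> cases hsh' : s' h
    · rfl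
    · simpa [hsh, hsh'] using this hC' hC hw.symm ⟨hsh', hsh⟩
    · exact absurd ⟨hsh, hsh'⟩ hs
    · rfl
  obtain ⟨hs, hs'⟩ := hs
  simp only [buoyWord_succ, hs, hs', ↓reduceIte, Bool.false_eq_true, List.append_nil] at hw
  have hmem : E h ∈ buoyWord h s' E' := by simp [← hw]
  have hlt := hC'.lt_of_mem_buoyWord hmem
  have hle := hC.le h (by omega)
  have hcopy := hC'.eq_of_start_eq_false h (by omega) hs'
  omega

lemma eq_of_buoyWord_eq (hC : IsBuoyColumn h L E s) (hC' : IsBuoyColumn h L E' s')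
    (hw : buoyWord h s E = buoyWord h s' E') : ∀ r, r < h → E r = E' r ∧ s r = s' r := by
  induction h with
  | zero => intro r hr; omega
  | succ h ih =>
    have hsh := hC.start_last_eq hC' hw
    rw [buoyWord_succ, buoyWord_succ, ← hsh] at hw
    obtain ⟨hinit, hlast⟩ := List.append_inj' hw (by split <;> rfl)
    have hEh : E h = E' h := by
      cases hs : s h
      · rw [hC.eq_of_start_eq_false h (by omega) hs,
          hC'.eq_of_start_eq_false h (by omega) (hsh ▸ hs)]
      · simpa [hs] using hlast
    intro r hr
    rcases Nat.lt_succ_iff_lt_or_eq.mp hr with hr | rfl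
    · exact ih (hC.mono h.le_succ) (hC'.mono h.le_succ) hinit r hr
    · exact ⟨hEh, hsh⟩

end IsBuoyColumn

lemma inShape_iff_lt_colHeight {sh : List ℕ} (hsh : sh.Pairwise (· ≥ ·)) (r c : ℕ) :
    InShape sh r c ↔ r < colHeight sh c := by
  induction sh generalizing r with
  | nil => simp [colHeight]
  | cons a l ih =>
    rw [List.pairwise_cons] at hsh
    by_cases hca : c < a
    · have hheight : colHeight (a :: l) c = colHeight l c + 1 := by
        simp [colHeight, hca]
      cases r with
      | zero => simp [hca, hheight]
      | succ r => simp [hheight, ← ih hsh.2 r]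
    · have hheight : colHeight (a :: l) c = 0 := by
        simp only [colHeight, List.length_eq_zero_iff, List.filter_eq_nil_iff, decide_eq_true_eq]
        intro x hx
        rcases List.mem_cons.mp hx with rfl | hx
        · exact hca
        · have := hsh.1 x hx
          omega
      have hrow : (a :: l).getD r 0 ≤ a := by
        cases r with
        | zero => simp
        | succ r =>
          rw [List.getD_cons_succ, List.getD_eq_getElem?_getD]
          cases hx : l[r]? with
          | none => simp
          | some x => exact hsh.1 x (List.mem_of_getElem? hx)
      simp only [InShape, hheight, Nat.not_lt_zero, iff_false]
      omega

lemma colHeight_eq_zero {sh : List ℕ} (hsh : sh.Pairwise (· ≥ ·)) {c : ℕ}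
    (hc : sh.headD 0 ≤ c) : colHeight sh c = 0 := by
  have hout : ¬ InShape sh 0 c := by cases sh <;> simp_all
  exact Nat.eq_zero_of_not_pos fun hpos => hout ((inShape_iff_lt_colHeight hsh 0 c).mpr hpos)

section IsVST

variable {n : ℕ} {sh : List ℕ} {T T' : VST}

lemma IsVST.isBuoyColumn_zero (hT : IsVST n sh T) (hsh : sh.Pairwise (· ≥ ·)) :
    IsBuoyColumn (colHeight sh 0) 0 (T.entry · 0) (T.start · 0) := by
  obtain ⟨-, -, -, hcol, hfirst, -⟩ := hT
  refine ⟨fun r hr => hcol r 0 ?_, fun r _ => Nat.zero_le _, fun r hr hs => ?_⟩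
  · exact (inShape_iff_lt_colHeight hsh _ _).mpr hr
  · simp [hfirst r ((inShape_iff_lt_colHeight hsh _ _).mpr hr)] at hs

lemma IsVST.isBuoyColumn_succ (hT : IsVST n sh T) (hsh : sh.Pairwise (· ≥ ·)) (c : ℕ) :
    IsBuoyColumn (colHeight sh (c + 1)) (T.entry · c) (T.entry · (c + 1))
      (T.start · (c + 1)) := by
  obtain ⟨-, -, hrow, hcol, -, hcopy⟩ := hT
  have hin := inShape_iff_lt_colHeight hsh
  exact ⟨fun r hr => hcol r _ ((hin _ _).mpr hr), fun r hr => hrow r c ((hin _ _).mpr hr),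
    fun r hr hs => hcopy r c ((hin _ _).mpr hr) hs⟩

lemma IsVST.column_eq (hT : IsVST n sh T) (hT' : IsVST n sh T') (hsh : sh.Pairwise (· ≥ ·))
    {c : ℕ} {L : ℕ → ℕ} (hC : IsBuoyColumn (colHeight sh c) L (T.entry · c) (T.start · c))
    (hC' : IsBuoyColumn (colHeight sh c) L (T'.entry · c) (T'.start · c))
    (hw : buoyWord (colHeight sh c) (T.start · c) (T.entry · c)
      = buoyWord (colHeight sh c) (T'.start · c) (T'.entry · c)) (r : ℕ) :
    T.entry r c = T'.entry r c ∧ T.start r c = T'.start r c := by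
  by_cases hr : r < colHeight sh c
  · exact hC.eq_of_buoyWord_eq hC' hw r hr
  · rw [← inShape_iff_lt_colHeight hsh] at hr
    obtain ⟨he, hs⟩ := hT.1 r c hr
    obtain ⟨he', hs'⟩ := hT'.1 r c hr
    rw [he, hs, he', hs']
    exact ⟨rfl, rfl⟩

end IsVST

lemma vstWord_eq_flatten (sh : List ℕ) (T : VST) :
    vstWord sh T = ((List.range (sh.headD 0)).map fun c =>
      (buoyWord (colHeight sh c) (T.start · c) (T.entry · c)).reverse).flatten := by
  simp only [vstWord, vstTagged, buoyWord, List.map_flatten, List.map_map]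
  congr 1
  refine List.map_congr_left fun c _ => ?_
  rw [Function.comp_apply, List.map_filterMap, ← List.filterMap_reverse]
  refine List.filterMap_congr fun r _ => ?_
  cases T.start r c <;> rfl

lemma buoyWord_eq_of_vstWord_eq {sh : List ℕ} (hsh : sh.Pairwise (· ≥ ·)) {T T' : VST}
    (hb : ∀ c, buoyCount sh T c = buoyCount sh T' c) (hw : vstWord sh T = vstWord sh T')
    (c : ℕ) :
    buoyWord (colHeight sh c) (T.start · c) (T.entry · c)
      = buoyWord (colHeight sh c) (T'.start · c) (T'.entry · c) := by
  by_cases hc : c < sh.headD 0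
  · rw [vstWord_eq_flatten, vstWord_eq_flatten] at hw
    have hcols := List.eq_iff_flatten_eq.mpr ⟨hw, by
      simp only [List.map_map]
      exact List.map_inj_left.mpr fun c _ => by simpa [length_buoyWord, buoyCount] using hb c⟩
    simpa using List.map_inj_left.mp hcols c (List.mem_range.mpr hc)
  · rw [colHeight_eq_zero hsh (not_lt.mp hc)]
    rfl

attribute [ext] VST

/-- A valued-set tableau of shape `λ` is determined by its column buoy
counts and its reading word: if two valued-set tableaux of shape `λ` have the same number
of buoys in every column and the same reading word, they are equal.  (In particular, the
reading word is injective on each connected crystal component, since the crystal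
operators preserve the column buoy counts.) -/
theorem vst_reading_word_injective
    (n : ℕ) (lam : List ℕ) (hlam : IsPartition lam)
    (T T' : VST) (hT : IsVST n lam T) (hT' : IsVST n lam T')
    (hb : ∀ c, buoyCount lam T c = buoyCount lam T' c)
    (hw : vstWord lam T = vstWord lam T') :
    T = T' := by
  have hsh := hlam.1
  have hwords := buoyWord_eq_of_vstWord_eq hsh hb hw
  have hcols : ∀ c r, T.entry r c = T'.entry r c ∧ T.start r c = T'.start r c := by
    intro c
    induction c with
    | zero =>
      exact hT.column_eq hT' hsh (hT.isBuoyColumn_zero hsh) (hT'.isBuoyColumn_zero hsh) (hwords 0)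
    | succ c ih =>
      have hleft : (T'.entry · c) = (T.entry · c) := funext fun r => (ih r).1.symm
      exact hT.column_eq hT' hsh (hT.isBuoyColumn_succ hsh c)
        (hleft ▸ hT'.isBuoyColumn_succ hsh c) (hwords (c + 1))
  ext r c
  exacts [(hcols c r).1, (hcols c r).2]
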